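/- (Pruning Lemma 1) Let s_1 and s_2 be two nonempty segments with lower and upper bounds as defined. If s_1.lb > s_2.ub, then no point of s_2 is an optimal location; i.e., for every point p_2 ∈ s_2 there exists a point (any p_1 ∈ s_1) with strictly larger score, so s_2 contains no subsegment of an optimal segment. -/

import Mathlib

/-!
Every route counted in `s₁.lb` passes through each point of `s₁`, and every route through a
point of `s₂` is counted in `s₂.ub`; with nonnegative weights this gives
`score p₂ ≤ s₂.ub < s₁.lb ≤ score p₁` for `p₂ ∈ s₂`, `p₁ ∈ s₁`.
-/

open Finset

namespace RouteCover

open scoped Classical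

variable {P ι M : Type*} [AddCommMonoid M] [Preorder M] [AddLeftMono M]
  (R : Finset ι) (route : ι → Set P) (weight : ι → M)

noncomputable def pointScore (p : P) : M :=
  ∑ r ∈ R.filter (fun r => p ∈ route r), weight r

noncomputable def lowerBound (s : Set P) : M :=
  ∑ r ∈ R.filter (fun r => s ⊆ route r), weight r

noncomputable def upperBound (s : Set P) : M :=
  ∑ r ∈ R.filter (fun r => (route r ∩ s).Nonempty), weight r

variable {R weight}

theorem sum_filter_mono {p q : ι → Prop} (hw : ∀ r ∈ R, 0 ≤ weight r)
    (hpq : ∀ r ∈ R, p r → q r) :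
    ∑ r ∈ R.filter p, weight r ≤ ∑ r ∈ R.filter q, weight r :=
  sum_le_sum_of_subset_of_nonneg (monotone_filter_right R hpq)
    fun r hr _ => hw r (mem_filter.mp hr).1

theorem lowerBound_le_pointScore (hw : ∀ r ∈ R, 0 ≤ weight r) {s : Set P} {p : P}
    (hp : p ∈ s) : lowerBound R route weight s ≤ pointScore R route weight p :=
  sum_filter_mono hw fun _ _ hs => hs hp

theorem pointScore_le_upperBound (hw : ∀ r ∈ R, 0 ≤ weight r) {s : Set P} {p : P}
    (hp : p ∈ s) : pointScore R route weight p ≤ upperBound R route weight s :=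
  sum_filter_mono hw fun _ _ hr => ⟨p, hr, hp⟩

end RouteCover

open RouteCover

open scoped Classical in
theorem pruning_lemma_one_general {P ι : Type*} (R : Finset ι) (route : ι → Set P)
    (weight : ι → ℝ) (hw : ∀ r ∈ R, 0 ≤ weight r)
    (score : P → ℝ)
    (hscore : ∀ p, score p = ∑ r ∈ R.filter (fun r => p ∈ route r), weight r)
    (s₁ s₂ : Set P) (hs₁ : s₁.Nonempty)
    (hprune : (∑ r ∈ R.filter (fun r => (route r ∩ s₂).Nonempty), weight r) <
      ∑ r ∈ R.filter (fun r => s₁ ⊆ route r), weight r) :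
    ∀ p₂ ∈ s₂, (∀ p₁ ∈ s₁, score p₂ < score p₁) ∧ ¬ (∀ q : P, score q ≤ score p₂) := by
  intro p₂ hp₂
  have beaten : ∀ p₁ ∈ s₁, score p₂ < score p₁ := by
    intro p₁ hp₁
    rw [hscore, hscore]
    calc pointScore R route weight p₂
        ≤ upperBound R route weight s₂ := pointScore_le_upperBound route hw hp₂
      _ < lowerBound R route weight s₁ := hprune
      _ ≤ pointScore R route weight p₁ := lowerBound_le_pointScore route hw hp₁
  obtain ⟨p₁, hp₁⟩ := hs₁
  exact ⟨beaten, fun hopt => (hopt p₁).not_gt (beaten p₁ hp₁)⟩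

open scoped Classical in
/-- Pruning Lemma 1: if s₁.lb > s₂.ub then every point of s₂ is
strictly beaten by every point of s₁, so s₂ contains no optimal location. -/
theorem pruning_lemma_one {P ι : Type*} (R : Finset ι) (route : ι → Set P)
    (weight : ι → ℝ) (hw : ∀ r ∈ R, 0 ≤ weight r)
    (score : P → ℝ)
    (hscore : ∀ p, score p = ∑ r ∈ R.filter (fun r => p ∈ route r), weight r)
    (s₁ s₂ : Set P) (hs₁ : s₁.Nonempty) (hs₂ : s₂.Nonempty)
    (hprune : (∑ r ∈ R.filter (fun r => (route r ∩ s₂).Nonempty), weight r) <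
      ∑ r ∈ R.filter (fun r => s₁ ⊆ route r), weight r) :
    ∀ p₂ ∈ s₂, (∀ p₁ ∈ s₁, score p₂ < score p₁) ∧ ¬ (∀ q : P, score q ≤ score p₂) :=
  pruning_lemma_one_general R route weight hw score hscore s₁ s₂ hs₁ hprune
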